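/- arXiv:0810.2114 — 2 statements merged into one kernel-verified Lean document; each statement's English description precedes it below -/
import Mathlib

section
/- Let R be a nonzero commutative ring and Q = R³ with multiplication (x₁,x₂,x₃)(y₁,y₂,y₃) = (x₁ + y₁ + (x₂+y₂)x₃y₃, x₂+y₂, x₃+y₃). Then every left inner mapping of Q is an automorphism of Q, i.e., for all x, y, u, v ∈ Q, (xy)\\(x(y·uv)) = [(xy)\\(x(yu))]·[(xy)\\(x(yv))]. -/
/-- The multiplication of the loop `Ter(R)` on `R × R × R`. -/
def terMul {R : Type*} [CommRing R] (x y : R × R × R) : R × R × R :=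
  (x.1 + y.1 + (x.2.1 + y.2.1) * x.2.2 * y.2.2, x.2.1 + y.2.1, x.2.2 + y.2.2)

/-!
The left inner mapping `L_{y,x}` fixes the last two coordinates and shifts the first one by
`x₃y₃·u₂ - x₂y₃·u₃`, a linear function of `(u₂, u₃)`. Since the correction term of the
multiplication only involves the last two coordinates, which add, such a shift is an
automorphism.
-/

section

variable {R : Type*} [CommRing R]

theorem terMul_left_cancel {a b c : R × R × R} (h : terMul a b = terMul a c) : b = c := by
  obtain ⟨a1, a2, a3⟩ := a
  obtain ⟨b1, b2, b3⟩ := b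
  obtain ⟨c1, c2, c3⟩ := c
  simp only [terMul, Prod.mk.injEq] at h
  obtain ⟨h1, h2, h3⟩ := h
  obtain rfl : b2 = c2 := add_left_cancel h2
  obtain rfl : b3 = c3 := add_left_cancel h3
  simpa using h1

/-- The left inner mapping `u ↦ (xy)\(x(yu))` of `Ter(R)`. -/
def terLeftInner (x y u : R × R × R) : R × R × R :=
  (u.1 + x.2.2 * y.2.2 * u.2.1 - x.2.1 * y.2.2 * u.2.2, u.2.1, u.2.2)

theorem terMul_terMul_terLeftInner (x y u : R × R × R) :
    terMul (terMul x y) (terLeftInner x y u) = terMul x (terMul y u) := by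
  simp only [terMul, terLeftInner, Prod.mk.injEq]
  refine ⟨by ring, by ring, by ring⟩

theorem terLeftInner_terMul (x y u v : R × R × R) :
    terLeftInner x y (terMul u v) = terMul (terLeftInner x y u) (terLeftInner x y v) := by
  simp only [terMul, terLeftInner, Prod.mk.injEq, and_true]
  ring

end

theorem stmt_15_general (R : Type*) [CommRing R] :
    ∀ x y u v a b c : R × R × R,
      terMul (terMul x y) a = terMul x (terMul y (terMul u v)) →
      terMul (terMul x y) b = terMul x (terMul y u) →
      terMul (terMul x y) c = terMul x (terMul y v) →
      a = terMul b c := by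
  intro x y u v a b c ha hb hc
  have eq_terLeftInner {w z : R × R × R}
      (h : terMul (terMul x y) z = terMul x (terMul y w)) : z = terLeftInner x y w :=
    terMul_left_cancel (h.trans (terMul_terMul_terLeftInner x y w).symm)
  rw [eq_terLeftInner ha, eq_terLeftInner hb, eq_terLeftInner hc, terLeftInner_terMul]

theorem stmt_15 (R : Type*) [CommRing R] [Nontrivial R] :
    ∀ x y u v a b c : R × R × R,
      terMul (terMul x y) a = terMul x (terMul y (terMul u v)) →
      terMul (terMul x y) b = terMul x (terMul y u) →
      terMul (terMul x y) c = terMul x (terMul y v) →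
      a = terMul b c :=
  stmt_15_general R
end

section
/- Let n > 0 and b, c be invertible elements of Z_n. Then the map φ(x₁,x₂,x₃) = ((c/b)x₁, (c/b)x₂, x₃) is an isomorphism from Terg(Z_n; 0, b) to Terg(Z_n; 0, c). -/
/-- The overflow indicator on `ZMod n`. -/
def ovf {n : ℕ} [NeZero n] (x y : ZMod n) : ℕ :=
  if n ≤ x.val + y.val then 1 else 0

/-- The multiplication of the loop `Terg(Z_n; a, b)` on `(ZMod n)³`. -/
def tergMul {n : ℕ} [NeZero n] (a b : ZMod n)
    (x y : ZMod n × ZMod n × ZMod n) : ZMod n × ZMod n × ZMod n :=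
  (x.1 + y.1 + (x.2.1 + y.2.1) * x.2.2 * y.2.2 + a * (ovf x.2.1 y.2.1 : ZMod n)
      + b * (ovf x.2.2 y.2.2 : ZMod n),
    x.2.1 + y.2.1, x.2.2 + y.2.2)

/-! Scaling the first two coordinates by `k` leaves the third coordinate, which alone feeds the
`b`-overflow term, untouched; so for `a = 0` it carries `Terg(Z_n; 0, b)` onto
`Terg(Z_n; 0, k b)`, and for a unit `k` it is invertible. Take `k = c / b`. -/

def tergScale {R : Type*} [Mul R] (k : R) (x : R × R × R) : R × R × R :=
  (k * x.1, k * x.2.1, x.2.2)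

theorem tergScale_bijective {M : Type*} [Monoid M] {k : M} (hk : IsUnit k) :
    Function.Bijective (tergScale k) := by
  obtain ⟨u, rfl⟩ := hk
  exact u.mulLeft_bijective.prodMap (u.mulLeft_bijective.prodMap Function.bijective_id)

theorem tergScale_tergMul_zero {n : ℕ} [NeZero n] (k b : ZMod n)
    (x y : ZMod n × ZMod n × ZMod n) :
    tergScale k (tergMul 0 b x y) = tergMul 0 (k * b) (tergScale k x) (tergScale k y) := by
  simp only [tergScale, tergMul, Prod.mk.injEq]
  exact ⟨by ring, by ring, trivial⟩

theorem stmt_19 (n : ℕ) [NeZero n] (b c : ZMod n)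
    (b' : ZMod n) (hb : b * b' = 1) (hc : IsUnit c) :
    Function.Bijective
        (fun x : ZMod n × ZMod n × ZMod n => (c * b' * x.1, c * b' * x.2.1, x.2.2)) ∧
      ∀ x y : ZMod n × ZMod n × ZMod n,
        (fun x : ZMod n × ZMod n × ZMod n => (c * b' * x.1, c * b' * x.2.1, x.2.2))
            (tergMul 0 b x y) =
          tergMul 0 c (c * b' * x.1, c * b' * x.2.1, x.2.2)
            (c * b' * y.1, c * b' * y.2.1, y.2.2) := by
  have hb' : IsUnit b' := IsUnit.of_mul_eq_one b (by rw [mul_comm, hb])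
  have hk : c * b' * b = c := by rw [mul_assoc, mul_comm b', hb, mul_one]
  refine ⟨tergScale_bijective (hc.mul hb'), fun x y => ?_⟩
  have hom := tergScale_tergMul_zero (c * b') b x y
  rw [hk] at hom
  exact hom
end
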